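/- arXiv:1405.3075 — 9 statements merged into one kernel-verified Lean document; each statement's English description precedes it below -/
import Mathlib

section
/- The sum over all pairs of coprime positive integers (n,m) of 1/(n^2 m^2 (n+m)^2) equals 1/3. -/
namespace CoprimeSternBrocot

abbrev P := {p : ℕ × ℕ // 0 < p.1 ∧ 0 < p.2 ∧ Nat.Coprime p.1 p.2}

noncomputable def F (p : P) : ℝ := 1 / (3 * (p.1.1 : ℝ) ^ 3 * (p.1.2 : ℝ) ^ 3)

def root : P := ⟨(1, 1), by norm_num [Nat.Coprime]⟩

def L (p : P) : P :=
  ⟨(p.1.1, p.1.1 + p.1.2), p.2.1, by omega, by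
    have h := p.2.2.2
    simpa [Nat.coprime_add_self_left, add_comm] using h⟩

def R (p : P) : P :=
  ⟨(p.1.1 + p.1.2, p.1.2), by omega, p.2.2.1, by
    have h := p.2.2.2
    simpa [Nat.coprime_add_self_left] using h⟩

example : True := trivial

lemma hL : Function.Injective L := by
  rintro ⟨⟨a, b⟩, _⟩ ⟨⟨c, d⟩, _⟩ h
  simp only [L, Subtype.mk.injEq, Prod.mk.injEq] at h
  exact Subtype.ext (Prod.ext h.1 (show b = d by omega))

lemma hR : Function.Injective R := by
  rintro ⟨⟨a, b⟩, _⟩ ⟨⟨c, d⟩, _⟩ h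
  simp only [R, Subtype.mk.injEq, Prod.mk.injEq] at h
  exact Subtype.ext (Prod.ext (show a = c by omega) h.2)

end CoprimeSternBrocot
namespace CoprimeSternBrocot

lemma mem_L (p : P) : p ∈ Set.range L ↔ p.1.1 < p.1.2 := by
  constructor
  · rintro ⟨⟨⟨a, b⟩, _, hb, _⟩, rfl⟩
    simpa [L] using hb
  · rintro h
    obtain ⟨⟨n, m⟩, hn, hm, hc⟩ := p
    simp only at h
    refine ⟨⟨(n, m - n), hn, by omega, ?_⟩, ?_⟩
    · have : Nat.Coprime n (m - n + n) := by rwa [show m - n + n = m by omega]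
      simpa [Nat.coprime_add_self_right] using this
    · exact Subtype.ext (Prod.ext rfl (by simp [L]; omega))

lemma mem_R (p : P) : p ∈ Set.range R ↔ p.1.2 < p.1.1 := by
  constructor
  · rintro ⟨⟨⟨a, b⟩, ha, _, _⟩, rfl⟩
    simpa [R] using ha
  · rintro h
    obtain ⟨⟨n, m⟩, hn, hm, hc⟩ := p
    simp only at h
    refine ⟨⟨(n - m, m), by omega, hm, ?_⟩, ?_⟩
    · have : Nat.Coprime (n - m + m) m := by rwa [show n - m + m = n by omega]
      simpa [Nat.coprime_add_self_left] using this
    · exact Subtype.ext (Prod.ext (by simp [R]; omega) rfl)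

lemma partition : (Set.univ : Set P) = {root} ∪ (Set.range L ∪ Set.range R) := by
  apply Set.eq_of_subset_of_subset _ (Set.subset_univ _)
  rintro ⟨⟨n, m⟩, hn, hm, hc⟩ _
  rcases lt_trichotomy n m with h | h | h
  · exact Or.inr (Or.inl ((mem_L _).2 h))
  · left
    have hm1 : m = 1 := by
      have := Nat.Coprime.gcd_eq_one hc
      rw [h] at this
      simpa using this
    have hn1 : n = 1 := by omega
    simp only [Set.mem_singleton_iff]
    exact Subtype.ext (Prod.ext (show n = 1 from hn1) (show m = 1 from hm1))
  · exact Or.inr (Or.inr ((mem_R _).2 h))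

lemma disj1 : Disjoint (Set.range L) (Set.range R) := by
  rw [Set.disjoint_left]
  intro p h1 h2
  rw [mem_L] at h1; rw [mem_R] at h2; omega

lemma disj2 : Disjoint ({root} : Set P) (Set.range L ∪ Set.range R) := by
  rw [Set.disjoint_left]
  rintro p rfl h
  rcases h with h | h
  · rw [mem_L] at h; simp [root] at h
  · rw [mem_R] at h; simp [root] at h

end CoprimeSternBrocot
namespace CoprimeSternBrocot

set_option maxHeartbeats 800000 in
lemma hF : Summable F := by
  have h3 : Summable fun n : ℕ => 1 / (n : ℝ) ^ 3 :=
    Real.summable_one_div_nat_pow.mpr (by norm_num)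
  have hprod : Summable fun p : ℕ × ℕ => (1 / (p.1 : ℝ) ^ 3) * (1 / (p.2 : ℝ) ^ 3) :=
    h3.mul_of_nonneg h3 (fun n => by positivity) (fun n => by positivity)
  have hsub : Summable fun p : P => (1 / (p.1.1 : ℝ) ^ 3) * (1 / (p.1.2 : ℝ) ^ 3) :=
    hprod.comp_injective Subtype.coe_injective
  refine (hsub.mul_left (1/3 : ℝ)).congr fun p => ?_
  simp only [F, one_div, mul_inv]
  ring

lemma key : ∑' p : P, F p = F root + ((∑' p : P, F (L p)) + ∑' p : P, F (R p)) := by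
  calc ∑' p : P, F p = ∑' p : (Set.univ : Set P), F p := (tsum_univ F).symm
    _ = ∑' p : ↑(({root} : Set P) ∪ (Set.range L ∪ Set.range R)), F p := by rw [← partition]
    _ = (∑' p : ({root} : Set P), F p) + ∑' p : ↑(Set.range L ∪ Set.range R), F p :=
        Summable.tsum_union_disjoint disj2 (hF.subtype _) (hF.subtype _)
    _ = F root + ((∑' p : ↑(Set.range L), F p) + ∑' p : ↑(Set.range R), F p) := by
        rw [tsum_singleton, Summable.tsum_union_disjoint disj1 (hF.subtype _) (hF.subtype _)]
    _ = F root + ((∑' p : P, F (L p)) + ∑' p : P, F (R p)) := by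
        rw [tsum_range F hL, tsum_range F hR]

lemma telescope (p : P) :
    (1 : ℝ) / ((p.1.1 : ℝ) ^ 2 * (p.1.2 : ℝ) ^ 2 * ((p.1.1 : ℝ) + p.1.2) ^ 2)
      = F p - F (L p) - F (R p) := by
  obtain ⟨⟨n, m⟩, hn, hm, -⟩ := p
  have ha : (0 : ℝ) < n := by exact_mod_cast hn
  have hb : (0 : ℝ) < m := by exact_mod_cast hm
  simp only [F, L, R]
  push_cast
  field_simp
  ring

end CoprimeSternBrocot

open CoprimeSternBrocot in
/-- The sum over all pairs of coprime positive integers `(n, m)` of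
`1 / (n² m² (n+m)²)` equals `1/3`. -/
theorem tsum_coprime_inv_sq_sq_sq :
    ∑' p : {p : ℕ × ℕ // 0 < p.1 ∧ 0 < p.2 ∧ Nat.Coprime p.1 p.2},
      (1 : ℝ) / ((p.1.1 : ℝ) ^ 2 * (p.1.2 : ℝ) ^ 2 * ((p.1.1 : ℝ) + p.1.2) ^ 2)
      = 1 / 3 := by
  have hFL : Summable fun p : P => F (L p) := hF.comp_injective hL
  have hFR : Summable fun p : P => F (R p) := hF.comp_injective hR
  calc ∑' p : P, (1 : ℝ) / ((p.1.1 : ℝ) ^ 2 * (p.1.2 : ℝ) ^ 2 * ((p.1.1 : ℝ) + p.1.2) ^ 2)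
      = ∑' p : P, (F p - F (L p) - F (R p)) := tsum_congr telescope
    _ = (∑' p : P, F p) - (∑' p : P, F (L p)) - ∑' p : P, F (R p) := by
        rw [Summable.tsum_sub (hF.sub hFL) hFR, Summable.tsum_sub hF hFL]
    _ = F CoprimeSternBrocot.root := by rw [key]; ring
    _ = 1 / 3 := by norm_num [F, CoprimeSternBrocot.root]
end

section
/- The function Ψ_sing : ℝ² → ℝ defined by Ψ_sing(u,v) = uv/(u+v) if u,v ≥ 0 (with value 0 at (0,0)), Ψ_sing(u,v) = u if u ≤ min(0,v), and Ψ_sing(u,v) = v if v ≤ min(0,u), is concave and positively homogeneous of degree 1 (conic). -/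
/-- The function `Ψ_sing` on `ℝ²`: `uv/(u+v)` when `u, v ≥ 0` (with value `0`
at the origin, which is automatic here since `0/0 = 0` in Lean), `u` when
`u ≤ min 0 v`, and `v` when `v ≤ min 0 u`. -/
noncomputable def psiSing (p : ℝ × ℝ) : ℝ :=
  if 0 ≤ p.1 ∧ 0 ≤ p.2 then p.1 * p.2 / (p.1 + p.2)
  else if p.1 ≤ min 0 p.2 then p.1
  else p.2

/-- `psiSing` is bounded above by each linear function `t²u + (1-t)²v`. -/
lemma psiSing_le (p : ℝ × ℝ) (t : ℝ) (ht0 : 0 ≤ t) (ht1 : t ≤ 1) :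
    psiSing p ≤ t ^ 2 * p.1 + (1 - t) ^ 2 * p.2 := by
  obtain ⟨u, v⟩ := p
  unfold psiSing
  dsimp only
  split_ifs with h1 h2
  · obtain ⟨hu, hv⟩ := h1
    rcases eq_or_lt_of_le (by linarith : (0:ℝ) ≤ u + v) with hs | hs
    · have hu0 : u = 0 := by linarith
      have hv0 : v = 0 := by linarith
      simp [hu0, hv0]
    · rw [div_le_iff₀ hs]
      nlinarith [sq_nonneg (t * u - (1 - t) * v), sq_nonneg t, sq_nonneg (1 - t)]
  · have hu0 : u ≤ 0 := le_trans h2 (min_le_left _ _)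
    have huv : u ≤ v := le_trans h2 (min_le_right _ _)
    nlinarith [mul_nonneg (sq_nonneg (1 - t)) (sub_nonneg.2 huv),
      mul_nonneg (mul_nonneg ht0 (by linarith : (0:ℝ) ≤ 1 - t)) (neg_nonneg.2 hu0)]
  · -- here v < 0 or (u > min 0 v with ¬(u,v ≥ 0))
    push_neg at h1 h2
    rcases le_or_gt 0 u with hu | hu
    · have hv : v < 0 := by
        rcases lt_or_ge v 0 with h | h
        · exact h
        · exact absurd (h1 hu) (not_lt.2 h)
      nlinarith [mul_nonneg (sq_nonneg t) hu, sq_nonneg (1 - t), mul_nonneg (mul_nonneg ht0 (by linarith : 0 ≤ 2 - t)) (neg_nonneg.2 hv.le)]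
    · have hvu : v < u := lt_of_not_ge fun h => absurd (le_min hu.le h) (not_le.2 h2)
      have hv : v < 0 := hvu.trans hu
      nlinarith [mul_nonneg (sq_nonneg t) (sub_nonneg.2 hvu.le),
        mul_nonneg (mul_nonneg ht0 (by linarith : (0:ℝ) ≤ 1 - t)) (neg_nonneg.2 hv.le)]

/-- `psiSing` attains the value of one of those linear functions. -/
lemma psiSing_eq (p : ℝ × ℝ) :
    ∃ t : ℝ, 0 ≤ t ∧ t ≤ 1 ∧ psiSing p = t ^ 2 * p.1 + (1 - t) ^ 2 * p.2 := by
  obtain ⟨u, v⟩ := p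
  unfold psiSing
  dsimp only
  split_ifs with h1 h2
  · obtain ⟨hu, hv⟩ := h1
    rcases eq_or_lt_of_le (by linarith : (0:ℝ) ≤ u + v) with hs | hs
    · refine ⟨0, le_refl 0, zero_le_one, ?_⟩
      have hu0 : u = 0 := by linarith
      have hv0 : v = 0 := by linarith
      simp [hu0, hv0]
    · refine ⟨v / (u + v), div_nonneg hv hs.le, ?_, ?_⟩
      · rw [div_le_one hs]; linarith
      · field_simp
        ring
  · exact ⟨1, zero_le_one, le_refl 1, by ring⟩
  · exact ⟨0, le_refl 0, zero_le_one, by ring⟩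

/-- `Ψ_sing` is concave and positively homogeneous of degree 1 (conic). -/
theorem psiSing_concave_and_conic :
    ConcaveOn ℝ Set.univ psiSing ∧
    ∀ c : ℝ, 0 ≤ c → ∀ p : ℝ × ℝ, psiSing (c • p) = c * psiSing p := by
  constructor
  · refine ⟨convex_univ, fun x _ y _ a b ha hb hab => ?_⟩
    obtain ⟨t, ht0, ht1, ht⟩ := psiSing_eq (a • x + b • y)
    have hx := psiSing_le x t ht0 ht1
    have hy := psiSing_le y t ht0 ht1
    have h1 : (a • x + b • y).1 = a * x.1 + b * y.1 := rfl
    have h2 : (a • x + b • y).2 = a * x.2 + b * y.2 := rfl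
    rw [ht, h1, h2]
    simp only [smul_eq_mul]
    nlinarith [mul_le_mul_of_nonneg_left hx ha, mul_le_mul_of_nonneg_left hy hb]
  · intro c hc p
    rcases eq_or_lt_of_le hc with rfl | hc
    · simp [psiSing]
    obtain ⟨u, v⟩ := p
    have hcu : c • ((u, v) : ℝ × ℝ) = (c * u, c * v) := rfl
    rw [hcu]
    unfold psiSing
    dsimp only
    by_cases h1 : 0 ≤ u ∧ 0 ≤ v
    · rw [if_pos ⟨mul_nonneg hc.le h1.1, mul_nonneg hc.le h1.2⟩, if_pos h1]
      rcases eq_or_ne (u + v) 0 with hs | hs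
      · have hu0 : u = 0 := by rcases h1 with ⟨a, b⟩; linarith
        have hv0 : v = 0 := by rcases h1 with ⟨a, b⟩; linarith
        simp [hu0, hv0]
      · have hcs : c * u + c * v ≠ 0 := by
          rw [← mul_add]; exact mul_ne_zero (ne_of_gt hc) hs
        field_simp
    · have h1' : ¬(0 ≤ c * u ∧ 0 ≤ c * v) := by
        rintro ⟨a, b⟩
        exact h1 ⟨nonneg_of_mul_nonneg_right a hc, nonneg_of_mul_nonneg_right b hc⟩
      rw [if_neg h1', if_neg h1]
      by_cases h2 : u ≤ min 0 v
      · have hu0 : u ≤ 0 := h2.trans (min_le_left _ _)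
        have huv : u ≤ v := h2.trans (min_le_right _ _)
        rw [if_pos (le_min (by nlinarith) (by nlinarith)), if_pos h2]
      · have h2' : ¬(c * u ≤ min 0 (c * v)) := by
          intro h
          have hu0 : c * u ≤ 0 := h.trans (min_le_left _ _)
          have huv : c * u ≤ c * v := h.trans (min_le_right _ _)
          exact h2 (le_min (by nlinarith) (le_of_mul_le_mul_left huv hc))
        rw [if_neg h2', if_neg h2]
end

section
/- The stability set {φ ∈ (ℝ²)^∨ : φ(u,v) ≥ Ψ_sing(u,v) for all (u,v) ∈ ℝ²} of the function Ψ_sing equals {(x,y) : x ≥ 0, y ≥ 0, x + y ≤ 1, √x + √y ≥ 1}. -/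
/-- The stability set of `Ψ_sing`, identifying a linear functional `φ` with
`(x,y)` via `φ(u,v) = xu + yv`, equals
`{(x,y) : x ≥ 0, y ≥ 0, x + y ≤ 1, √x + √y ≥ 1}`. -/
theorem stabilitySet_psiSing :
    {q : ℝ × ℝ | ∀ u v : ℝ, q.1 * u + q.2 * v ≥ psiSing (u, v)} =
    {q : ℝ × ℝ | 0 ≤ q.1 ∧ 0 ≤ q.2 ∧ q.1 + q.2 ≤ 1 ∧
      1 ≤ Real.sqrt q.1 + Real.sqrt q.2} := by
  ext ⟨x, y⟩
  simp only [Set.mem_setOf_eq]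
  constructor
  · intro h
    have hx : 0 ≤ x := by have := h 1 0; norm_num [psiSing] at this; linarith
    have hy : 0 ≤ y := by have := h 0 1; norm_num [psiSing] at this; linarith
    have hsum : x + y ≤ 1 := by
      have := h (-1) (-1); norm_num [psiSing] at this; linarith
    refine ⟨hx, hy, hsum, ?_⟩
    rcases eq_or_lt_of_le hx with hx0 | hx0
    · -- x = 0, show y ≥ 1
      have hy1 : 1 ≤ y := by
        by_contra hy1
        push_neg at hy1
        have h1y : (1:ℝ) - y ≠ 0 := by linarith
        set u : ℝ := (y + 1) / (1 - y) with hu_def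
        have hu : 0 < u := div_pos (by linarith) (by linarith)
        have key := h u 1
        rw [psiSing] at key
        rw [if_pos (show (0:ℝ) ≤ u ∧ (0:ℝ) ≤ 1 from ⟨hu.le, by norm_num⟩)] at key
        simp only [ge_iff_le] at key
        rw [div_le_iff₀ (by linarith)] at key
        have hcl : u * (1 - y) = y + 1 := by
          rw [hu_def, div_mul_cancel₀ _ h1y]
        rw [← hx0] at key
        nlinarith [key, hcl]
      calc (1:ℝ) = Real.sqrt 1 := by simp
        _ ≤ Real.sqrt y := Real.sqrt_le_sqrt hy1
        _ ≤ Real.sqrt x + Real.sqrt y := by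
            have := Real.sqrt_nonneg x; linarith
    · rcases eq_or_lt_of_le hy with hy0 | hy0
      · -- y = 0, show x ≥ 1
        have hx1 : 1 ≤ x := by
          by_contra hx1
          push_neg at hx1
          have h1x : (1:ℝ) - x ≠ 0 := by linarith
          set v : ℝ := (x + 1) / (1 - x) with hv_def
          have hv : 0 < v := div_pos (by linarith) (by linarith)
          have key := h 1 v
          rw [psiSing] at key
          rw [if_pos (show (0:ℝ) ≤ 1 ∧ (0:ℝ) ≤ v from ⟨by norm_num, hv.le⟩)] at key
          simp only [ge_iff_le] at key
          rw [div_le_iff₀ (by linarith)] at key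
          have hcl : v * (1 - x) = x + 1 := by
            rw [hv_def, div_mul_cancel₀ _ h1x]
          rw [← hy0] at key
          nlinarith [key, hcl]
        calc (1:ℝ) = Real.sqrt 1 := by simp
          _ ≤ Real.sqrt x := Real.sqrt_le_sqrt hx1
          _ ≤ Real.sqrt x + Real.sqrt y := by
              have := Real.sqrt_nonneg y; linarith
      · -- x > 0, y > 0
        set sx := Real.sqrt x with hsx_def
        set sy := Real.sqrt y with hsy_def
        have hsx : 0 < sx := Real.sqrt_pos.mpr hx0
        have hsy : 0 < sy := Real.sqrt_pos.mpr hy0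
        have hx2 : sx ^ 2 = x := Real.sq_sqrt hx
        have hy2 : sy ^ 2 = y := Real.sq_sqrt hy
        have key := h sy sx
        rw [psiSing] at key
        rw [if_pos (show (0:ℝ) ≤ sy ∧ (0:ℝ) ≤ sx from ⟨hsy.le, hsx.le⟩)] at key
        simp only [ge_iff_le] at key
        rw [div_le_iff₀ (by positivity)] at key
        nlinarith [key, hx2, hy2, mul_pos hsx hsy, mul_pos (mul_pos hsx hsy) (add_pos hsx hsy)]
  · rintro ⟨hx, hy, hsum, hsqrt⟩ u v
    rw [ge_iff_le, psiSing]
    dsimp only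
    split_ifs with h1 h2
    · obtain ⟨hu, hv⟩ := h1
      rcases eq_or_lt_of_le (by linarith : (0:ℝ) ≤ u + v) with hz | hz
      · have hu0 : u = 0 := by linarith
        have hv0 : v = 0 := by linarith
        simp [hu0, hv0]
      · rw [div_le_iff₀ hz]
        have hx2 : Real.sqrt x ^ 2 = x := Real.sq_sqrt hx
        have hy2 : Real.sqrt y ^ 2 = y := Real.sq_sqrt hy
        have hone : 1 ≤ (Real.sqrt x + Real.sqrt y) ^ 2 := by
          nlinarith [Real.sqrt_nonneg x, Real.sqrt_nonneg y]
        have hxu2 : (Real.sqrt x * u) ^ 2 = x * u ^ 2 := by rw [mul_pow, hx2]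
        have hyv2 : (Real.sqrt y * v) ^ 2 = y * v ^ 2 := by rw [mul_pow, hy2]
        have e2 : (Real.sqrt x + Real.sqrt y) ^ 2
            = x + y + 2 * (Real.sqrt x * Real.sqrt y) := by
          rw [add_sq, hx2, hy2]; ring
        have e1 : 1 * (u * v) ≤ (Real.sqrt x + Real.sqrt y) ^ 2 * (u * v) :=
          mul_le_mul_of_nonneg_right hone (mul_nonneg hu hv)
        have e3 : 2 * (Real.sqrt x * Real.sqrt y) * (u * v) ≤ x * u ^ 2 + y * v ^ 2 := by
          nlinarith [sq_nonneg (Real.sqrt x * u - Real.sqrt y * v), hxu2, hyv2]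
        nlinarith [e1, e2, e3, mul_nonneg hu hv]
    · have hu0 : u ≤ 0 := le_trans h2 (min_le_left _ _)
      have huv : u ≤ v := le_trans h2 (min_le_right _ _)
      nlinarith [mul_nonneg hy (sub_nonneg.mpr huv),
        mul_nonneg (sub_nonneg.mpr hsum) (neg_nonneg.mpr hu0)]
    · have hmin : min 0 v < u := not_le.mp h2
      have hv0 : v ≤ 0 := by
        by_cases hc : 0 ≤ u
        · rcases not_and_or.mp h1 with h | h
          · exact absurd hc h
          · exact le_of_not_ge h
        · push_neg at hc
          by_contra hvc
          push_neg at hvc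
          rw [min_eq_left hvc.le] at hmin
          linarith
      have hvu : v ≤ u := by
        rw [min_eq_right hv0] at hmin
        exact hmin.le
      nlinarith [mul_nonneg hx (sub_nonneg.mpr hvu),
        mul_nonneg (sub_nonneg.mpr hsum) (neg_nonneg.mpr hv0)]
end

section
/- For coprime positive integers n, m, under the substitution u = st, v = t (blow-up coordinates), the function f_{n,m}(u,v) = (1/(nm)) · log(u ū) log(v v̄) / (n log(u ū) + m log(v v̄)) satisfies f_{n,m}(st, t) = (1/(n m (n+m))) log(t t̄) + f_{n,n+m}(s,t). -/
open Complex

/-- The function `f_{n,m}(u,v) = (1/(nm)) · log(uū) log(vv̄) / (n log(uū) + m log(vv̄))`,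
where `log(uū) = log |u|²` is expressed via `Complex.normSq`. -/
noncomputable def fnm (n m : ℕ) (u v : ℂ) : ℝ :=
  (1 / ((n : ℝ) * m)) *
    (Real.log (Complex.normSq u) * Real.log (Complex.normSq v)) /
    ((n : ℝ) * Real.log (Complex.normSq u) + (m : ℝ) * Real.log (Complex.normSq v))

/-- Under the blow-up substitution `u = st`, `v = t`, the function `f_{n,m}`
satisfies `f_{n,m}(st, t) = (1/(n m (n+m))) log(t t̄) + f_{n,n+m}(s, t)`. -/
theorem fnm_blowup (n m : ℕ) (hn : 0 < n) (hm : 0 < m) (hnm : Nat.Coprime n m)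
    (s t : ℂ) (hs : s ≠ 0) (ht : t ≠ 0)
    (hst : ‖s * t‖ < 1) (ht1 : ‖t‖ < 1) :
    fnm n m (s * t) t =
      (1 / ((n : ℝ) * m * (n + m))) * Real.log (Complex.normSq t) +
        fnm n (n + m) s t := by
  have hns : Complex.normSq s ≠ 0 := (Complex.normSq_pos.mpr hs).ne'
  have hnt : Complex.normSq t ≠ 0 := (Complex.normSq_pos.mpr ht).ne'
  set A := Real.log (Complex.normSq s) with hA
  set B := Real.log (Complex.normSq t) with hB
  have hABneg : A + B < 0 := by
    rw [hA, hB, ← Real.log_mul hns hnt, ← Complex.normSq_mul]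
    apply Real.log_neg
    · exact Complex.normSq_pos.mpr (mul_ne_zero hs ht)
    · rw [Complex.normSq_eq_norm_sq]
      exact pow_lt_one₀ (norm_nonneg _) hst (by norm_num)
  have hBneg : B < 0 := by
    rw [hB]
    apply Real.log_neg
    · exact Complex.normSq_pos.mpr ht
    · rw [Complex.normSq_eq_norm_sq]
      exact pow_lt_one₀ (norm_nonneg _) ht1 (by norm_num)
  have hnR : (0:ℝ) < n := Nat.cast_pos.mpr hn
  have hmR : (0:ℝ) < m := Nat.cast_pos.mpr hm
  have hD : (n:ℝ) * A + ((n:ℝ) + m) * B ≠ 0 := by nlinarith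
  have hD2 : (n:ℝ) * (A + B) + (m:ℝ) * B ≠ 0 := by
    intro h; apply hD; linarith [h]
  simp only [fnm, Complex.normSq_mul, Real.log_mul hns hnt, ← hA, ← hB, Nat.cast_add]
  have hD3 : (n:ℝ) * A + B * ((n:ℝ) + m) ≠ 0 := by rw [mul_comm B]; exact hD
  field_simp
  ring
end

section
/- For f(u,v) = (log(uū) log(vv̄))/(log(uū) + log(vv̄)) on the punctured bidisk, the (2,2)-form ∂∂̄f ∧ ∂∂̄f is identically zero. -/
open Complex

/-- Standard basis vectors of `ℂ × ℂ` as a complex plane with coordinates `(u,v)`. -/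
def basisVec : Fin 2 → ℂ × ℂ
  | 0 => (1, 0)
  | 1 => (0, 1)

/-- The Wirtinger derivative `∂g/∂z_i = ½(∂g/∂x_i − i ∂g/∂y_i)` of a function
`g : ℂ × ℂ → ℂ`, computed from the real Fréchet derivative. -/
noncomputable def wdz (g : ℂ × ℂ → ℂ) (i : Fin 2) (p : ℂ × ℂ) : ℂ :=
  (fderiv ℝ g p (basisVec i) - Complex.I * fderiv ℝ g p (Complex.I • basisVec i)) / 2

/-- The conjugate Wirtinger derivative `∂g/∂z̄_i = ½(∂g/∂x_i + i ∂g/∂y_i)`. -/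
noncomputable def wdzbar (g : ℂ × ℂ → ℂ) (i : Fin 2) (p : ℂ × ℂ) : ℂ :=
  (fderiv ℝ g p (basisVec i) + Complex.I * fderiv ℝ g p (Complex.I • basisVec i)) / 2

/-- The function `f(u,v) = log(uū) log(vv̄) / (log(uū) + log(vv̄))`. -/
noncomputable def fSing (p : ℂ × ℂ) : ℂ :=
  ((Real.log (Complex.normSq p.1) * Real.log (Complex.normSq p.2)) /
    (Real.log (Complex.normSq p.1) + Real.log (Complex.normSq p.2)) : ℝ)

open ContinuousLinearMap in
lemma hasFDerivAt_nsq_fst (q : ℂ × ℂ) :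
    HasFDerivAt (fun p : ℂ × ℂ => Complex.normSq p.1)
      ((q.1.re • (Complex.reCLM.comp (fst ℝ ℂ ℂ)) + q.1.re • (Complex.reCLM.comp (fst ℝ ℂ ℂ))) +
       (q.1.im • (Complex.imCLM.comp (fst ℝ ℂ ℂ)) + q.1.im • (Complex.imCLM.comp (fst ℝ ℂ ℂ)))) q := by
  have hX : HasFDerivAt (fun p : ℂ × ℂ => p.1.re) (Complex.reCLM.comp (fst ℝ ℂ ℂ)) q :=
    (Complex.reCLM.comp (fst ℝ ℂ ℂ)).hasFDerivAt
  have hY : HasFDerivAt (fun p : ℂ × ℂ => p.1.im) (Complex.imCLM.comp (fst ℝ ℂ ℂ)) q :=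
    (Complex.imCLM.comp (fst ℝ ℂ ℂ)).hasFDerivAt
  exact ((hX.mul hX).add (hY.mul hY)).congr_of_eventuallyEq
    (Filter.Eventually.of_forall fun p => by simp [Complex.normSq_apply])

open ContinuousLinearMap in
lemma hasFDerivAt_nsq_snd (q : ℂ × ℂ) :
    HasFDerivAt (fun p : ℂ × ℂ => Complex.normSq p.2)
      ((q.2.re • (Complex.reCLM.comp (snd ℝ ℂ ℂ)) + q.2.re • (Complex.reCLM.comp (snd ℝ ℂ ℂ))) +
       (q.2.im • (Complex.imCLM.comp (snd ℝ ℂ ℂ)) + q.2.im • (Complex.imCLM.comp (snd ℝ ℂ ℂ)))) q := by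
  have hX : HasFDerivAt (fun p : ℂ × ℂ => p.2.re) (Complex.reCLM.comp (snd ℝ ℂ ℂ)) q :=
    (Complex.reCLM.comp (snd ℝ ℂ ℂ)).hasFDerivAt
  have hY : HasFDerivAt (fun p : ℂ × ℂ => p.2.im) (Complex.imCLM.comp (snd ℝ ℂ ℂ)) q :=
    (Complex.imCLM.comp (snd ℝ ℂ ℂ)).hasFDerivAt
  exact ((hX.mul hX).add (hY.mul hY)).congr_of_eventuallyEq
    (Filter.Eventually.of_forall fun p => by simp [Complex.normSq_apply])

/-- `∂f/∂z̄₁ = (M²/P²)·u/|u|²`, packaged as an explicit function. -/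
noncomputable def G0 (p : ℂ × ℂ) : ℂ :=
  ((Real.log (Complex.normSq p.2) * Real.log (Complex.normSq p.2) *
      ((Real.log (Complex.normSq p.1) + Real.log (Complex.normSq p.2)) *
        (Real.log (Complex.normSq p.1) + Real.log (Complex.normSq p.2)))⁻¹ *
      (Complex.normSq p.1)⁻¹ : ℝ)) * p.1

/-- `∂f/∂z̄₂ = (L²/P²)·v/|v|²`, packaged as an explicit function. -/
noncomputable def G1 (p : ℂ × ℂ) : ℂ :=
  ((Real.log (Complex.normSq p.1) * Real.log (Complex.normSq p.1) *
      ((Real.log (Complex.normSq p.1) + Real.log (Complex.normSq p.2)) *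
        (Real.log (Complex.normSq p.1) + Real.log (Complex.normSq p.2)))⁻¹ *
      (Complex.normSq p.2)⁻¹ : ℝ)) * p.2

lemma wdzbar_fSing_zero (q : ℂ × ℂ) (ha : Complex.normSq q.1 ≠ 0) (hb : Complex.normSq q.2 ≠ 0)
    (hP : Real.log (Complex.normSq q.1) + Real.log (Complex.normSq q.2) ≠ 0) :
    wdzbar fSing 0 q = G0 q := by
  have h1 := hasFDerivAt_nsq_fst q
  have h2 := hasFDerivAt_nsq_snd q
  have hL := (Real.hasDerivAt_log ha).comp_hasFDerivAt q h1
  have hM := (Real.hasDerivAt_log hb).comp_hasFDerivAt q h2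
  have hR := (hL.mul hM).mul ((hasDerivAt_inv hP).comp_hasFDerivAt q (hL.add hM))
  have hf : HasFDerivAt fSing _ q := Complex.ofRealCLM.hasFDerivAt.comp q hR
  rw [wdzbar, hf.fderiv]
  simp only [basisVec, ContinuousLinearMap.comp_apply, ContinuousLinearMap.add_apply,
    ContinuousLinearMap.coe_smul', Pi.smul_apply, Function.comp, Prod.smul_fst, Prod.smul_snd,
    ContinuousLinearMap.coe_fst', ContinuousLinearMap.coe_snd', Complex.reCLM_apply,
    Complex.imCLM_apply, Complex.ofRealCLM_apply, smul_eq_mul, Prod.fst_mul, Prod.snd_mul,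
    Pi.mul_apply, Pi.add_apply]
  simp only [Complex.one_re, Complex.one_im, Complex.zero_re, Complex.zero_im, mul_one,
    mul_zero, add_zero, zero_add, Complex.mul_re, Complex.mul_im, Complex.I_re, Complex.I_im,
    one_mul, zero_mul, zero_sub, sub_zero, neg_neg]
  rw [G0]
  set x := q.1.re with hx
  set y := q.1.im with hy
  set a := Complex.normSq q.1 with hadef
  set b := Complex.normSq q.2 with hbdef
  rw [show q.1 = (↑x + ↑y * Complex.I) from by rw [hx, hy]; exact (Complex.re_add_im q.1).symm]
  rw [div_eq_iff (two_ne_zero (α := ℂ)), Complex.ext_iff]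
  constructor <;>
  · simp only [Complex.add_re, Complex.mul_re, Complex.mul_im, Complex.add_im, Complex.I_re,
      Complex.I_im, Complex.ofReal_re, Complex.ofReal_im, Complex.re_ofNat, Complex.im_ofNat,
      zero_mul, one_mul, mul_zero, zero_sub, sub_zero, add_zero, zero_add, neg_zero, mul_one]
    field_simp
    ring

lemma wdzbar_fSing_one (q : ℂ × ℂ) (ha : Complex.normSq q.1 ≠ 0) (hb : Complex.normSq q.2 ≠ 0)
    (hP : Real.log (Complex.normSq q.1) + Real.log (Complex.normSq q.2) ≠ 0) :
    wdzbar fSing 1 q = G1 q := by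
  have h1 := hasFDerivAt_nsq_fst q
  have h2 := hasFDerivAt_nsq_snd q
  have hL := (Real.hasDerivAt_log ha).comp_hasFDerivAt q h1
  have hM := (Real.hasDerivAt_log hb).comp_hasFDerivAt q h2
  have hR := (hL.mul hM).mul ((hasDerivAt_inv hP).comp_hasFDerivAt q (hL.add hM))
  have hf : HasFDerivAt fSing _ q := Complex.ofRealCLM.hasFDerivAt.comp q hR
  rw [wdzbar, hf.fderiv]
  simp only [basisVec, ContinuousLinearMap.comp_apply, ContinuousLinearMap.add_apply,
    ContinuousLinearMap.coe_smul', Pi.smul_apply, Function.comp, Prod.smul_fst, Prod.smul_snd,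
    ContinuousLinearMap.coe_fst', ContinuousLinearMap.coe_snd', Complex.reCLM_apply,
    Complex.imCLM_apply, Complex.ofRealCLM_apply, smul_eq_mul, Prod.fst_mul, Prod.snd_mul,
    Pi.mul_apply, Pi.add_apply]
  simp only [Complex.one_re, Complex.one_im, Complex.zero_re, Complex.zero_im, mul_one,
    mul_zero, add_zero, zero_add, Complex.mul_re, Complex.mul_im, Complex.I_re, Complex.I_im,
    one_mul, zero_mul, zero_sub, sub_zero, neg_neg]
  rw [G1]
  set x := q.2.re with hx
  set y := q.2.im with hy
  set a := Complex.normSq q.1 with hadef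
  set b := Complex.normSq q.2 with hbdef
  rw [show q.2 = (↑x + ↑y * Complex.I) from by rw [hx, hy]; exact (Complex.re_add_im q.2).symm]
  rw [div_eq_iff (two_ne_zero (α := ℂ)), Complex.ext_iff]
  constructor <;>
  · simp only [Complex.add_re, Complex.mul_re, Complex.mul_im, Complex.add_im, Complex.I_re,
      Complex.I_im, Complex.ofReal_re, Complex.ofReal_im, Complex.re_ofNat, Complex.im_ofNat,
      zero_mul, one_mul, mul_zero, zero_sub, sub_zero, add_zero, zero_add, neg_zero, mul_one]
    field_simp
    ring
set_option maxHeartbeats 4000000 in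
lemma wdz_G0 (q : ℂ × ℂ) (ha : Complex.normSq q.1 ≠ 0) (hb : Complex.normSq q.2 ≠ 0)
    (hP : Real.log (Complex.normSq q.1) + Real.log (Complex.normSq q.2) ≠ 0) :
    wdz G0 0 q = ((-(2 * Real.log (Complex.normSq q.2) * Real.log (Complex.normSq q.2)) /
        ((Real.log (Complex.normSq q.1) + Real.log (Complex.normSq q.2)) *
         (Real.log (Complex.normSq q.1) + Real.log (Complex.normSq q.2)) *
         (Real.log (Complex.normSq q.1) + Real.log (Complex.normSq q.2)) *
         Complex.normSq q.1) : ℝ)) ∧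
    wdz G0 1 q = ((2 * Real.log (Complex.normSq q.1) * Real.log (Complex.normSq q.2) /
        ((Real.log (Complex.normSq q.1) + Real.log (Complex.normSq q.2)) *
         (Real.log (Complex.normSq q.1) + Real.log (Complex.normSq q.2)) *
         (Real.log (Complex.normSq q.1) + Real.log (Complex.normSq q.2)) *
         Complex.normSq q.1 * Complex.normSq q.2) : ℝ)) * (q.1 * (starRingEnd ℂ) q.2) := by
  have h1 := hasFDerivAt_nsq_fst q
  have h2 := hasFDerivAt_nsq_snd q
  have hL := (Real.hasDerivAt_log ha).comp_hasFDerivAt q h1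
  have hM := (Real.hasDerivAt_log hb).comp_hasFDerivAt q h2
  have hPP : (Real.log (Complex.normSq q.1) + Real.log (Complex.normSq q.2)) *
      (Real.log (Complex.normSq q.1) + Real.log (Complex.normSq q.2)) ≠ 0 := mul_ne_zero hP hP
  have hs0 := ((hM.mul hM).mul
      ((hasDerivAt_inv hPP).comp_hasFDerivAt q ((hL.add hM).mul (hL.add hM)))).mul
    ((hasDerivAt_inv ha).comp_hasFDerivAt q h1)
  have hG0 : HasFDerivAt G0 _ q := (Complex.ofRealCLM.hasFDerivAt.comp q hs0).mul
      ((ContinuousLinearMap.fst ℝ ℂ ℂ).hasFDerivAt)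
  constructor <;>
  · rw [wdz, hG0.fderiv]
    simp only [basisVec, ContinuousLinearMap.comp_apply, ContinuousLinearMap.add_apply,
      ContinuousLinearMap.coe_smul', ContinuousLinearMap.smul_apply, Pi.smul_apply,
      Function.comp, Prod.smul_fst, Prod.smul_snd,
      ContinuousLinearMap.coe_fst', ContinuousLinearMap.coe_snd', Complex.reCLM_apply,
      Complex.imCLM_apply, Complex.ofRealCLM_apply, smul_eq_mul, Prod.fst_mul, Prod.snd_mul,
      Pi.mul_apply, Pi.add_apply]
    simp only [Complex.one_re, Complex.one_im, Complex.zero_re, Complex.zero_im, mul_one,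
      mul_zero, add_zero, zero_add, Complex.mul_re, Complex.mul_im, Complex.I_re, Complex.I_im,
      one_mul, zero_mul, zero_sub, sub_zero, neg_neg]
    set x1 := q.1.re with hx1
    set y1 := q.1.im with hy1
    set x2 := q.2.re with hx2
    set y2 := q.2.im with hy2
    set a := Complex.normSq q.1 with hadef
    set b := Complex.normSq q.2 with hbdef
    rw [show q.1 = (↑x1 + ↑y1 * Complex.I) from by
      rw [hx1, hy1]; exact (Complex.re_add_im q.1).symm]
    first
    | rw [show q.2 = (↑x2 + ↑y2 * Complex.I) from by
        rw [hx2, hy2]; exact (Complex.re_add_im q.2).symm]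
    | skip
    have hsub : a = x1 * x1 + y1 * y1 := by
      rw [hadef, hx1, hy1, Complex.normSq_apply]
    have hsub2 : b = x2 * x2 + y2 * y2 := by
      rw [hbdef, hx2, hy2, Complex.normSq_apply]
    rw [hsub, hsub2] at hP ⊢
    rw [hsub] at ha
    rw [hsub2] at hb
    rw [div_eq_iff (two_ne_zero (α := ℂ)), Complex.ext_iff]
    constructor <;>
    · simp only [map_add, map_mul, Complex.conj_ofReal, Complex.conj_I,
        Complex.add_re, Complex.mul_re, Complex.mul_im, Complex.add_im, Complex.I_re,
        Complex.I_im, Complex.ofReal_re, Complex.ofReal_im, Complex.re_ofNat, Complex.im_ofNat,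
        Complex.neg_re, Complex.neg_im, Complex.sub_re, Complex.sub_im,
        zero_mul, one_mul, mul_zero, zero_sub, sub_zero, add_zero, zero_add, neg_zero, mul_one,
        mul_neg, neg_neg]
      have hP2 : Real.log (x1 ^ 2 + y1 ^ 2) + Real.log (x2 ^ 2 + y2 ^ 2) ≠ 0 := by
        simpa only [sq] using hP
      have ha2 : x1 ^ 2 + y1 ^ 2 ≠ 0 := by simpa only [sq] using ha
      have hb2 : x2 ^ 2 + y2 ^ 2 ≠ 0 := by simpa only [sq] using hb
      field_simp
      ring
set_option maxHeartbeats 4000000 in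
lemma wdz_G1 (q : ℂ × ℂ) (ha : Complex.normSq q.1 ≠ 0) (hb : Complex.normSq q.2 ≠ 0)
    (hP : Real.log (Complex.normSq q.1) + Real.log (Complex.normSq q.2) ≠ 0) :
    wdz G1 0 q = ((2 * Real.log (Complex.normSq q.1) * Real.log (Complex.normSq q.2) /
        ((Real.log (Complex.normSq q.1) + Real.log (Complex.normSq q.2)) *
         (Real.log (Complex.normSq q.1) + Real.log (Complex.normSq q.2)) *
         (Real.log (Complex.normSq q.1) + Real.log (Complex.normSq q.2)) *
         Complex.normSq q.1 * Complex.normSq q.2) : ℝ)) * (q.2 * (starRingEnd ℂ) q.1) ∧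
    wdz G1 1 q = ((-(2 * Real.log (Complex.normSq q.1) * Real.log (Complex.normSq q.1)) /
        ((Real.log (Complex.normSq q.1) + Real.log (Complex.normSq q.2)) *
         (Real.log (Complex.normSq q.1) + Real.log (Complex.normSq q.2)) *
         (Real.log (Complex.normSq q.1) + Real.log (Complex.normSq q.2)) *
         Complex.normSq q.2) : ℝ)) := by
  have h1 := hasFDerivAt_nsq_fst q
  have h2 := hasFDerivAt_nsq_snd q
  have hL := (Real.hasDerivAt_log ha).comp_hasFDerivAt q h1
  have hM := (Real.hasDerivAt_log hb).comp_hasFDerivAt q h2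
  have hPP : (Real.log (Complex.normSq q.1) + Real.log (Complex.normSq q.2)) *
      (Real.log (Complex.normSq q.1) + Real.log (Complex.normSq q.2)) ≠ 0 := mul_ne_zero hP hP
  have hs1 := ((hL.mul hL).mul
      ((hasDerivAt_inv hPP).comp_hasFDerivAt q ((hL.add hM).mul (hL.add hM)))).mul
    ((hasDerivAt_inv hb).comp_hasFDerivAt q h2)
  have hG1 : HasFDerivAt G1 _ q := (Complex.ofRealCLM.hasFDerivAt.comp q hs1).mul
      ((ContinuousLinearMap.snd ℝ ℂ ℂ).hasFDerivAt)
  constructor <;>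
  · rw [wdz, hG1.fderiv]
    simp only [basisVec, ContinuousLinearMap.comp_apply, ContinuousLinearMap.add_apply,
      ContinuousLinearMap.coe_smul', ContinuousLinearMap.smul_apply, Pi.smul_apply,
      Function.comp, Prod.smul_fst, Prod.smul_snd,
      ContinuousLinearMap.coe_fst', ContinuousLinearMap.coe_snd', Complex.reCLM_apply,
      Complex.imCLM_apply, Complex.ofRealCLM_apply, smul_eq_mul, Prod.fst_mul, Prod.snd_mul,
      Pi.mul_apply, Pi.add_apply]
    simp only [Complex.one_re, Complex.one_im, Complex.zero_re, Complex.zero_im, mul_one,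
      mul_zero, add_zero, zero_add, Complex.mul_re, Complex.mul_im, Complex.I_re, Complex.I_im,
      one_mul, zero_mul, zero_sub, sub_zero, neg_neg]
    set x1 := q.1.re with hx1
    set y1 := q.1.im with hy1
    set x2 := q.2.re with hx2
    set y2 := q.2.im with hy2
    set a := Complex.normSq q.1 with hadef
    set b := Complex.normSq q.2 with hbdef
    first
    | rw [show q.1 = (↑x1 + ↑y1 * Complex.I) from by
        rw [hx1, hy1]; exact (Complex.re_add_im q.1).symm]
    | skip
    first
    | rw [show q.2 = (↑x2 + ↑y2 * Complex.I) from by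
        rw [hx2, hy2]; exact (Complex.re_add_im q.2).symm]
    | skip
    have hsub : a = x1 * x1 + y1 * y1 := by
      rw [hadef, hx1, hy1, Complex.normSq_apply]
    have hsub2 : b = x2 * x2 + y2 * y2 := by
      rw [hbdef, hx2, hy2, Complex.normSq_apply]
    rw [hsub, hsub2] at hP ⊢
    rw [hsub] at ha
    rw [hsub2] at hb
    rw [div_eq_iff (two_ne_zero (α := ℂ)), Complex.ext_iff]
    constructor <;>
    · simp only [map_add, map_mul, Complex.conj_ofReal, Complex.conj_I,
        Complex.add_re, Complex.mul_re, Complex.mul_im, Complex.add_im, Complex.I_re,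
        Complex.I_im, Complex.ofReal_re, Complex.ofReal_im, Complex.re_ofNat, Complex.im_ofNat,
        Complex.neg_re, Complex.neg_im, Complex.sub_re, Complex.sub_im,
        zero_mul, one_mul, mul_zero, zero_sub, sub_zero, add_zero, zero_add, neg_zero, mul_one,
        mul_neg, neg_neg]
      have hP2 : Real.log (x1 ^ 2 + y1 ^ 2) + Real.log (x2 ^ 2 + y2 ^ 2) ≠ 0 := by
        simpa only [sq] using hP
      have ha2 : x1 ^ 2 + y1 ^ 2 ≠ 0 := by simpa only [sq] using ha
      have hb2 : x2 ^ 2 + y2 ^ 2 ≠ 0 := by simpa only [sq] using hb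
      field_simp
      ring

/-- On the punctured bidisk, the (2,2)-form `∂∂̄f ∧ ∂∂̄f` vanishes identically:
since `∂∂̄f ∧ ∂∂̄f = 2 det(∂²f/∂z_i∂z̄_j) dz₁∧dz̄₁∧dz₂∧dz̄₂` (up to sign), this is
expressed as the vanishing of the determinant of the complex Hessian of `f`. -/
theorem ddbar_fSing_wedge_self_eq_zero (p : ℂ × ℂ)
    (hu : p.1 ≠ 0) (hv : p.2 ≠ 0)
    (hu1 : ‖p.1‖ < 1) (hv1 : ‖p.2‖ < 1) :
    Matrix.det (Matrix.of fun i j : Fin 2 => wdz (wdzbar fSing j) i p) = 0 := by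
  have hapos : 0 < Complex.normSq p.1 := Complex.normSq_pos.mpr hu
  have hbpos : 0 < Complex.normSq p.2 := Complex.normSq_pos.mpr hv
  have ha1 : Complex.normSq p.1 < 1 := by
    rw [Complex.normSq_eq_norm_sq]
    nlinarith [norm_nonneg p.1]
  have hb1 : Complex.normSq p.2 < 1 := by
    rw [Complex.normSq_eq_norm_sq]
    nlinarith [norm_nonneg p.2]
  have hLneg : Real.log (Complex.normSq p.1) < 0 := Real.log_neg hapos ha1
  have hMneg : Real.log (Complex.normSq p.2) < 0 := Real.log_neg hbpos hb1
  have hPneg : Real.log (Complex.normSq p.1) + Real.log (Complex.normSq p.2) < 0 := by linarith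
  -- continuity facts
  have hc1 : ContinuousAt (fun q : ℂ × ℂ => Complex.normSq q.1) p :=
    (Complex.continuous_normSq.comp continuous_fst).continuousAt
  have hc2 : ContinuousAt (fun q : ℂ × ℂ => Complex.normSq q.2) p :=
    (Complex.continuous_normSq.comp continuous_snd).continuousAt
  have hl1 : ContinuousAt (fun q : ℂ × ℂ => Real.log (Complex.normSq q.1)) p :=
    Filter.Tendsto.comp (Real.continuousAt_log hapos.ne') hc1
  have hl2 : ContinuousAt (fun q : ℂ × ℂ => Real.log (Complex.normSq q.2)) p :=
    Filter.Tendsto.comp (Real.continuousAt_log hbpos.ne') hc2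
  have hcP : ContinuousAt (fun q : ℂ × ℂ =>
      Real.log (Complex.normSq q.1) + Real.log (Complex.normSq q.2)) p := hl1.add hl2
  have h1ev : ∀ᶠ q : ℂ × ℂ in nhds p, 0 < Complex.normSq q.1 :=
    hc1.eventually (eventually_gt_nhds hapos)
  have h2ev : ∀ᶠ q : ℂ × ℂ in nhds p, 0 < Complex.normSq q.2 :=
    hc2.eventually (eventually_gt_nhds hbpos)
  have hPev : ∀ᶠ q : ℂ × ℂ in nhds p,
      Real.log (Complex.normSq q.1) + Real.log (Complex.normSq q.2) < 0 :=
    hcP.eventually (eventually_lt_nhds hPneg)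
  have heq0 : wdzbar fSing 0 =ᶠ[nhds p] G0 := by
    filter_upwards [h1ev, h2ev, hPev] with q hq1 hq2 hq3
    exact wdzbar_fSing_zero q hq1.ne' hq2.ne' hq3.ne
  have heq1 : wdzbar fSing 1 =ᶠ[nhds p] G1 := by
    filter_upwards [h1ev, h2ev, hPev] with q hq1 hq2 hq3
    exact wdzbar_fSing_one q hq1.ne' hq2.ne' hq3.ne
  have hw0 : ∀ i, wdz (wdzbar fSing 0) i p = wdz G0 i p := by
    intro i; rw [wdz, wdz, heq0.fderiv_eq]
  have hw1 : ∀ i, wdz (wdzbar fSing 1) i p = wdz G1 i p := by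
    intro i; rw [wdz, wdz, heq1.fderiv_eq]
  obtain ⟨hA, hC⟩ := wdz_G0 p hapos.ne' hbpos.ne' hPneg.ne
  obtain ⟨hB, hD⟩ := wdz_G1 p hapos.ne' hbpos.ne' hPneg.ne
  rw [Matrix.det_fin_two]
  simp only [Matrix.of_apply]
  rw [hw0 0, hw0 1, hw1 0, hw1 1, hA, hB, hC, hD]
  have e1 : p.1 * (starRingEnd ℂ) p.1 = ((Complex.normSq p.1 : ℝ) : ℂ) := Complex.mul_conj p.1
  have e2 : p.2 * (starRingEnd ℂ) p.2 = ((Complex.normSq p.2 : ℝ) : ℂ) := Complex.mul_conj p.2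
  set L := Real.log (Complex.normSq p.1) with hLdef
  set M := Real.log (Complex.normSq p.2) with hMdef
  set a := Complex.normSq p.1 with hadef
  set b := Complex.normSq p.2 with hbdef
  have hZ : ((2 * L * M / ((L + M) * (L + M) * (L + M) * a * b) : ℝ) : ℂ) *
        (p.2 * (starRingEnd ℂ) p.1) *
        (((2 * L * M / ((L + M) * (L + M) * (L + M) * a * b) : ℝ) : ℂ) *
          (p.1 * (starRingEnd ℂ) p.2)) =
      ((2 * L * M / ((L + M) * (L + M) * (L + M) * a * b) : ℝ) : ℂ) *
        ((2 * L * M / ((L + M) * (L + M) * (L + M) * a * b) : ℝ) : ℂ) * ((a : ℂ) * (b : ℂ)) := by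
    rw [← e1, ← e2]; ring
  rw [hZ]
  have hfin : (-(2 * M * M) / ((L + M) * (L + M) * (L + M) * a)) *
      (-(2 * L * L) / ((L + M) * (L + M) * (L + M) * b)) -
      (2 * L * M / ((L + M) * (L + M) * (L + M) * a * b)) *
      (2 * L * M / ((L + M) * (L + M) * (L + M) * a * b)) * (a * b) = (0 : ℝ) := by
    have h1 : L + M ≠ 0 := hPneg.ne
    have h2 : a ≠ 0 := hapos.ne'
    have h3 : b ≠ 0 := hbpos.ne'
    field_simp
    ring
  calc (((-(2 * M * M) / ((L + M) * (L + M) * (L + M) * a) : ℝ) : ℂ) *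
        ((-(2 * L * L) / ((L + M) * (L + M) * (L + M) * b) : ℝ) : ℂ) -
        ((2 * L * M / ((L + M) * (L + M) * (L + M) * a * b) : ℝ) : ℂ) *
        ((2 * L * M / ((L + M) * (L + M) * (L + M) * a * b) : ℝ) : ℂ) * ((a : ℂ) * (b : ℂ)))
      = (((-(2 * M * M) / ((L + M) * (L + M) * (L + M) * a)) *
          (-(2 * L * L) / ((L + M) * (L + M) * (L + M) * b)) -
          (2 * L * M / ((L + M) * (L + M) * (L + M) * a * b)) *
          (2 * L * M / ((L + M) * (L + M) * (L + M) * a * b)) * (a * b) : ℝ) : ℂ) := by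
        push_cast; ring
    _ = 0 := by rw [hfin, Complex.ofReal_zero]
end

section
/- For 0 < ε < 1/e, the integral ∫_0^ε [2 (log ε²)² log(r²) · 2r] / [(log(r²) + log(ε²))⁴ r²] dr equals −1/6. -/
open Real MeasureTheory Filter Set Topology

noncomputable def bGee (L r : ℝ) : ℝ :=
  -L ^ 2 * ((Real.log (r ^ 2) + L)⁻¹) ^ 2 + 2 / 3 * L ^ 3 * ((Real.log (r ^ 2) + L)⁻¹) ^ 3

noncomputable def bGee0 (L r : ℝ) : ℝ := if r = 0 then 0 else bGee L r

lemma bGee_hasDerivAt (L r : ℝ) (hr : r ≠ 0) (ht : Real.log (r ^ 2) + L ≠ 0) :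
    HasDerivAt (bGee L)
      ((2 * L ^ 2 * Real.log (r ^ 2) * (2 * r)) /
        ((Real.log (r ^ 2) + L) ^ 4 * r ^ 2)) r := by
  have h1 : HasDerivAt (fun x : ℝ => Real.log (x ^ 2) + L) (2 / r) r := by
    have hp : HasDerivAt (fun x : ℝ => x ^ 2) (2 * r) r := by
      simpa using hasDerivAt_pow 2 r
    have := hp.log (pow_ne_zero 2 hr)
    have h2 : (2 * r) / (r ^ 2) = 2 / r := by field_simp
    simpa [h2] using this.add_const L
  have h2 := h1.inv ht
  have h3 := ((h2.pow 2).const_mul (-L ^ 2)).add ((h2.pow 3).const_mul (2 / 3 * L ^ 3))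
  refine (h3.congr_of_eventuallyEq (Filter.Eventually.of_forall fun x => rfl)).congr_deriv ?_
  simp only [Pi.inv_apply, Nat.cast_ofNat, Nat.add_one_sub_one, Nat.reduceSub, pow_one]
  generalize Real.log (r ^ 2) = s at ht ⊢
  have hs : s + L ≠ 0 := ht
  have hs' : L + s ≠ 0 := by rwa [add_comm]
  field_simp
  ring

/-- For `0 < ε < 1/e`, the integral
`∫_0^ε [2 (log ε²)² log(r²) · 2r] / [(log(r²) + log(ε²))⁴ r²] dr` equals `−1/6`. -/
theorem boundary_integral_eq_neg_sixth (ε : ℝ) (hε : 0 < ε) (hε1 : ε < 1 / Real.exp 1) :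
    (∫ r in (0 : ℝ)..ε,
        (2 * Real.log (ε ^ 2) ^ 2 * Real.log (r ^ 2) * (2 * r)) /
          ((Real.log (r ^ 2) + Real.log (ε ^ 2)) ^ 4 * r ^ 2))
      = -(1 / 6) := by
  set L := Real.log (ε ^ 2) with hLdef
  have hlogε : Real.log ε < -1 := by
    have h := Real.log_lt_log hε hε1
    rwa [one_div, Real.log_inv, Real.log_exp] at h
  have hL2 : L = 2 * Real.log ε := by
    rw [hLdef, Real.log_pow]; push_cast; ring
  have hLlt : L < -2 := by rw [hL2]; linarith
  have hLne : L ≠ 0 := by linarith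
  -- key pointwise facts on (0, ε)
  have hts : ∀ r ∈ Ioo (0 : ℝ) ε, Real.log (r ^ 2) + L < 2 * L := by
    intro r hr
    have h1 : Real.log r < Real.log ε := Real.log_lt_log hr.1 hr.2
    have : Real.log (r ^ 2) = 2 * Real.log r := by rw [Real.log_pow]; push_cast; ring
    rw [this, hL2]; linarith
  have htne : ∀ r ∈ Ioo (0 : ℝ) ε, Real.log (r ^ 2) + L ≠ 0 := fun r hr => by
    have := hts r hr; intro h; rw [h] at this; linarith
  set f : ℝ → ℝ := fun r =>
      (2 * L ^ 2 * Real.log (r ^ 2) * (2 * r)) /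
        ((Real.log (r ^ 2) + L) ^ 4 * r ^ 2) with hf
  -- derivative of bGee0 on the open interval
  have hderiv : ∀ r ∈ Ioo (0 : ℝ) ε, HasDerivAt (bGee0 L) (f r) r := by
    intro r hr
    have h := bGee_hasDerivAt L r (ne_of_gt hr.1) (htne r hr)
    apply h.congr_of_eventuallyEq
    filter_upwards [eventually_ne_nhds (ne_of_gt hr.1)] with x hx
    simp [bGee0, hx]
  -- f is nonpositive on (0, ε)
  have hfneg : ∀ r ∈ Ioo (0 : ℝ) ε, f r ≤ 0 := by
    intro r hr
    have hs : Real.log (r ^ 2) < 0 := by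
      have := hts r hr; linarith
    apply div_nonpos_of_nonpos_of_nonneg
    · nlinarith [mul_nonneg (sq_nonneg L) hr.1.le, hs]
    · positivity
  -- continuity of bGee0 on [0, ε]
  have hcont : ContinuousOn (bGee0 L) (Icc 0 ε) := by
    intro x hx
    rcases eq_or_ne x 0 with rfl | hx0
    · rw [ContinuousWithinAt]
      have h0 : bGee0 L 0 = 0 := by simp [bGee0]
      rw [h0]
      have hsub : Icc (0:ℝ) ε \ {0} ⊆ Ioi 0 := by
        rintro y ⟨hy1, hy2⟩
        exact lt_of_le_of_ne hy1.1 (Ne.symm hy2)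
      have hmono : 𝓝[Icc (0:ℝ) ε] 0 ≤ 𝓝[insert 0 (Ioi 0)] 0 := by
        apply nhdsWithin_mono
        intro y hy
        rcases eq_or_ne y 0 with rfl | hy0
        · exact mem_insert _ _
        · exact mem_insert_of_mem _ (hsub ⟨hy, hy0⟩)
      rw [nhdsWithin_insert] at hmono
      have htB : Tendsto (fun r : ℝ => Real.log (r ^ 2) + L) (𝓝[>] (0:ℝ)) atBot := by
        have h1 : Tendsto (fun r : ℝ => Real.log (r ^ 2)) (𝓝[>] (0:ℝ)) atBot := by
          have : Tendsto (fun r : ℝ => 2 * Real.log r) (𝓝[>] (0:ℝ)) atBot :=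
            (Real.tendsto_log_nhdsGT_zero).const_mul_atBot two_pos
          apply this.congr
          intro r; rw [Real.log_pow]; push_cast; ring
        exact tendsto_atBot_add_const_right _ L h1
      have hneg : Tendsto (fun r : ℝ => -(Real.log (r ^ 2) + L)) (𝓝[>] (0:ℝ)) atTop :=
        tendsto_neg_atBot_atTop.comp htB
      have hinv : Tendsto (fun r : ℝ => (Real.log (r ^ 2) + L)⁻¹) (𝓝[>] (0:ℝ)) (𝓝 0) := by
        have h := (tendsto_inv_atTop_zero.comp hneg).neg
        simp only [Function.comp, inv_neg, neg_neg, neg_zero] at h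
        exact h
      have hg : Tendsto (bGee L) (𝓝[>] (0:ℝ)) (𝓝 0) := by
        have h := ((hinv.pow 2).const_mul (-L ^ 2)).add ((hinv.pow 3).const_mul (2 / 3 * L ^ 3))
        have hval : (-L ^ 2 * 0 ^ 2 + 2 / 3 * L ^ 3 * 0 ^ 3 : ℝ) = 0 := by norm_num
        rw [hval] at h
        exact h.congr fun r => by simp only [bGee]
      have hG : Tendsto (bGee0 L) (𝓝[>] (0:ℝ)) (𝓝 0) := by
        apply hg.congr'
        filter_upwards [self_mem_nhdsWithin] with y hy
        simp [bGee0, ne_of_gt (mem_Ioi.mp hy)]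
      refine Tendsto.mono_left ?_ hmono
      rw [tendsto_sup]
      refine ⟨?_, hG⟩
      have := tendsto_pure_nhds (bGee0 L) 0
      simpa [h0] using this
    · -- x ≠ 0 : bGee0 = bGee near x, and bGee is continuous at x
      have hx0' : (0:ℝ) < x := lt_of_le_of_ne hx.1 (Ne.symm hx0)
      have htx : Real.log (x ^ 2) + L ≠ 0 := by
        have h1 : Real.log x ≤ Real.log ε := Real.log_le_log hx0' hx.2
        have h2 : Real.log (x ^ 2) = 2 * Real.log x := by rw [Real.log_pow]; push_cast; ring
        rw [h2, hL2]; intro h; linarith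
      have hc : ContinuousAt (bGee L) x := by
        have hsq : ContinuousAt (fun r : ℝ => r ^ 2) x := (continuous_pow 2).continuousAt
        have hl : ContinuousAt (fun r : ℝ => Real.log (r ^ 2) + L) x :=
          (hsq.log (pow_ne_zero 2 hx0)).add continuousAt_const
        exact ((hl.inv₀ htx).pow 2).const_mul _ |>.add (((hl.inv₀ htx).pow 3).const_mul _)
      have : ContinuousAt (bGee0 L) x := by
        apply hc.congr
        filter_upwards [eventually_ne_nhds hx0] with y hy
        simp [bGee0, hy]
      exact this.continuousWithinAt
  -- integrability
  have hint : IntervalIntegrable f volume 0 ε := by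
    have := intervalIntegral.intervalIntegrable_deriv_of_nonneg (g := fun r => -(bGee0 L r)) (g' := fun r => -(f r))
      (by exact (hcont.neg).mono (by rw [uIcc_of_le hε.le])) ?_ ?_
    · have h2 : f = -fun r => -f r := by funext r; simp
      rw [h2]; exact this.neg
    · intro x hx
      rw [min_eq_left hε.le, max_eq_right hε.le] at hx
      exact (hderiv x hx).neg
    · intro x hx
      rw [min_eq_left hε.le, max_eq_right hε.le] at hx
      show (0:ℝ) ≤ -f x
      linarith [hfneg x hx]
  -- FTC
  have hFTC := intervalIntegral.integral_eq_sub_of_hasDeriv_right_of_le hε.le hcont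
    (fun x hx => (hderiv x hx).hasDerivWithinAt) hint
  rw [hFTC]
  have h0 : bGee0 L 0 = 0 := by simp [bGee0]
  have hε' : bGee0 L ε = -(1/6) := by
    have : bGee0 L ε = bGee L ε := by simp [bGee0, ne_of_gt hε]
    rw [this, bGee, ← hLdef]
    have h2L : L + L ≠ 0 := by intro h; apply hLne; linarith
    field_simp
    ring
  rw [h0, hε']; ring
end

section
/- For a fixed positive integer ν and N ≥ 3, the minimum over all integers n of (N/2)n² + (N/2 + ν)n + N/8 + ν/2 equals (N/2)(ε(−ν/N)² − ε(−ν/N)) + N/8 − ν²/(2N), where ε(x) = x − ⌊x⌋ denotes the fractional part. -/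
/-- For `N ≥ 3` and a positive integer `ν ≤ N − 1`, the minimum over all
integers `n` of `(N/2)n² + (N/2 + ν)n + N/8 + ν/2` equals
`(N/2)(ε(−ν/N)² − ε(−ν/N)) + N/8 − ν²/(2N)`, where `ε(x) = x − ⌊x⌋` is the
fractional part (`Int.fract`). -/
theorem min_theta_multiplicity (N ν : ℕ) (hN : 3 ≤ N) (hν : 1 ≤ ν) (hνN : ν ≤ N - 1) :
    IsLeast
      {x : ℝ | ∃ n : ℤ,
        x = ((N : ℝ) / 2) * (n : ℝ) ^ 2 + ((N : ℝ) / 2 + (ν : ℝ)) * (n : ℝ)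
          + (N : ℝ) / 8 + (ν : ℝ) / 2}
      (((N : ℝ) / 2) * (Int.fract (-(ν : ℝ) / N) ^ 2 - Int.fract (-(ν : ℝ) / N))
        + (N : ℝ) / 8 - (ν : ℝ) ^ 2 / (2 * N)) := by
  have hνN' : ν < N := by omega
  have hN0 : (0:ℝ) < N := by exact_mod_cast (by omega : 0 < N)
  have hNR : (3:ℝ) ≤ N := by exact_mod_cast hN
  have hνR : (1:ℝ) ≤ ν := by exact_mod_cast hν
  have hνNR : (ν:ℝ) ≤ (N:ℝ) - 1 := by
    have : (ν:ℝ) + 1 ≤ N := by exact_mod_cast (by omega : ν + 1 ≤ N)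
    linarith
  have hfloor : ⌊-(ν:ℝ)/N⌋ = -1 := by
    rw [Int.floor_eq_iff]
    constructor
    · push_cast
      rw [le_div_iff₀ hN0]
      nlinarith
    · push_cast
      rw [div_lt_iff₀ hN0]
      nlinarith
  have hfr : Int.fract (-(ν:ℝ)/N) = 1 - (ν:ℝ)/N := by
    rw [Int.fract, hfloor]; push_cast; ring
  have key : (((N : ℝ) / 2) * (Int.fract (-(ν : ℝ) / N) ^ 2 - Int.fract (-(ν : ℝ) / N))
        + (N : ℝ) / 8 - (ν : ℝ) ^ 2 / (2 * N)) = (N:ℝ)/8 - (ν:ℝ)/2 := by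
    rw [hfr]; field_simp; ring
  rw [key]
  constructor
  · exact ⟨-1, by push_cast; ring⟩
  · rintro x ⟨n, rfl⟩
    rcases le_or_gt 0 n with hn | hn
    · have hn' : (0:ℝ) ≤ n := by exact_mod_cast hn
      nlinarith
    · rcases eq_or_lt_of_le (by omega : n ≤ -1) with hn1 | hn2
      · subst hn1; push_cast; ring_nf; nlinarith
      · have hn' : (n:ℝ) ≤ -2 := by exact_mod_cast (by omega : n ≤ -2)
        have h1 : (0:ℝ) ≤ -((n:ℝ)+1) := by linarith
        have h2 : (0:ℝ) ≤ -(((N:ℝ)/2)*n + ν) := by nlinarith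
        nlinarith [mul_nonneg h1 h2]
end

section
/- Let X be a smooth projective complex surface and let (C_Y)_Y and (C'_Y)_Y be two nets of ℚ-divisors indexed by the directed set of smooth birational models Y → X, compatible under push-forward. If the nets of self-intersection numbers (C_Y²) and (C'_Y²) both converge to finite limits, then the net of intersection numbers (C_Y · C'_Y) also converges to a finite limit. -/
open Filter

/-- Let `X` be a smooth projective complex surface. Its smooth birational
models form a directed set `ι`; for each model `Y` we have the ℚ-vector space
`V Y` of ℚ-divisors on `Y` with its (symmetric) intersection pairing `B Y`,
and for each morphism of models `Z ≤ Y` a pullback map `pull : V Z →ₗ V Y`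
satisfying the projection formula `B_Y(φ*x, φ*y) = B_Z(x, y)`.

Two nets `(C_Y)`, `(C'_Y)` of ℚ-divisors compatible under push-forward
decompose, for `Z ≤ Y`, as `C_Y = φ*(C_Z) + E` with `E` `φ`-exceptional:
`E` is orthogonal to all pullbacks, and by the Hodge index theorem the
intersection form is negative semidefinite on the span of the exceptional
parts `E`, `E'`.

If the nets of self-intersection numbers `(B_Y(C_Y,C_Y))` and
`(B_Y(C'_Y,C'_Y))` converge to finite limits, then the net of intersection
numbers `(B_Y(C_Y,C'_Y))` also converges to a finite limit. -/
theorem bdivisor_intersection_converges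
    {ι : Type*} [Preorder ι] [Nonempty ι] [IsDirected ι (· ≤ ·)]
    (V : ι → Type*) [∀ Y, AddCommGroup (V Y)] [∀ Y, Module ℚ (V Y)]
    (B : ∀ Y, V Y →ₗ[ℚ] V Y →ₗ[ℚ] ℝ)
    (hsymm : ∀ Y, ∀ x y : V Y, B Y x y = B Y y x)
    (pull : ∀ {Z Y : ι}, Z ≤ Y → (V Z →ₗ[ℚ] V Y))
    (hproj : ∀ {Z Y : ι} (h : Z ≤ Y) (x y : V Z),
      B Y (pull h x) (pull h y) = B Z x y)
    (C C' : ∀ Y : ι, V Y)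
    (hcompat : ∀ {Z Y : ι} (h : Z ≤ Y),
      ∃ E E' : V Y,
        C Y = pull h (C Z) + E ∧
        C' Y = pull h (C' Z) + E' ∧
        (∀ z : V Z, B Y (pull h z) E = 0) ∧
        (∀ z : V Z, B Y (pull h z) E' = 0) ∧
        (∀ q r : ℚ, B Y (q • E + r • E') (q • E + r • E') ≤ 0))
    (hC : ∃ l : ℝ, Tendsto (fun Y => B Y (C Y) (C Y)) atTop (nhds l))
    (hC' : ∃ l' : ℝ, Tendsto (fun Y => B Y (C' Y) (C' Y)) atTop (nhds l')) :
    ∃ m : ℝ, Tendsto (fun Y => B Y (C Y) (C' Y)) atTop (nhds m) := by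
  obtain ⟨l, hl⟩ := hC
  obtain ⟨l', hl'⟩ := hC'
  set f : ι → ℝ := fun Y => B Y (C Y) (C Y) with hf
  set f' : ι → ℝ := fun Y => B Y (C' Y) (C' Y) with hf'
  set g : ι → ℝ := fun Y => B Y (C Y) (C' Y) with hg
  set s : ι → ℝ := fun Y => B Y (C Y + C' Y) (C Y + C' Y) with hs
  set d : ι → ℝ := fun Y => B Y (C Y - C' Y) (C Y - C' Y) with hd
  -- key monotonicity of quadratic combinations
  have key : ∀ (q r : ℚ) {Z Y : ι}, Z ≤ Y →
      B Y (q • C Y + r • C' Y) (q • C Y + r • C' Y)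
        ≤ B Z (q • C Z + r • C' Z) (q • C Z + r • C' Z) := by
    intro q r Z Y h
    obtain ⟨E, E', hCE, hCE', hE, hE', hneg⟩ := hcompat h
    set P : V Y := pull h (q • C Z + r • C' Z) with hP
    set F : V Y := q • E + r • E' with hF
    have hdecomp : q • C Y + r • C' Y = P + F := by
      rw [hCE, hCE', hP, hF, map_add, map_smul, map_smul]
      module
    have horth : B Y P F = 0 := by
      rw [hF, map_add, map_smul, map_smul, hP, hE, hE', smul_zero, smul_zero,
        add_zero]
    have hexp : B Y (P + F) (P + F)
        = B Z (q • C Z + r • C' Z) (q • C Z + r • C' Z) + B Y F F := by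
      have h1 : B Y (P + F) (P + F) = B Y P P + B Y P F + B Y F P + B Y F F := by
        simp only [map_add, LinearMap.add_apply]
        ring
      rw [h1, hsymm Y F P, horth, hP, hproj]
      ring
    rw [hdecomp, hexp]
    have := hneg q r
    rw [← hF] at this
    linarith
  have hfanti : Antitone f := by
    intro Z Y h
    have := key 1 0 h
    simpa using this
  have hf'anti : Antitone f' := by
    intro Z Y h
    have := key 0 1 h
    simpa using this
  have hsanti : Antitone s := by
    intro Z Y h
    have := key 1 1 h
    simp only [one_smul] at this
    exact this
  have hdanti : Antitone d := by
    intro Z Y h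
    have := key 1 (-1) h
    simp only [one_smul, neg_smul, ← sub_eq_add_neg] at this
    exact this
  -- pointwise identities
  have hs_eq : ∀ Y, s Y = f Y + f' Y + 2 * g Y := by
    intro Y
    simp only [hs, hf, hf', hg, map_add, LinearMap.add_apply]
    rw [hsymm Y (C' Y) (C Y)]
    ring
  have hd_eq : ∀ Y, d Y = f Y + f' Y - 2 * g Y := by
    intro Y
    simp only [hd, hf, hf', hg, sub_eq_add_neg, map_add, map_neg,
      LinearMap.add_apply, LinearMap.neg_apply]
    rw [hsymm Y (C' Y) (C Y)]
    ring
  -- lower bounds coming from the limits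
  have hflb : ∀ Y, l ≤ f Y := by
    intro Y
    refine le_of_tendsto hl ?_
    filter_upwards [eventually_ge_atTop Y] with W hW
    exact hfanti hW
  have hf'lb : ∀ Y, l' ≤ f' Y := by
    intro Y
    refine le_of_tendsto hl' ?_
    filter_upwards [eventually_ge_atTop Y] with W hW
    exact hf'anti hW
  -- s is bounded below
  have Z₀ : ι := Classical.arbitrary ι
  have hsbdd : BddBelow (Set.range s) := by
    refine ⟨2 * l + 2 * l' - d Z₀, ?_⟩
    rintro x ⟨Y, rfl⟩
    obtain ⟨W, hYW, hZW⟩ := directed_of (· ≤ ·) Y Z₀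
    have h1 : s W ≤ s Y := hsanti hYW
    have h2 : d W ≤ d Z₀ := hdanti hZW
    have h3 := hflb W
    have h4 := hf'lb W
    have h5 : s W = 2 * (f W + f' W) - d W := by
      rw [hs_eq, hd_eq]; ring
    linarith
  have hstend : Tendsto s atTop (nhds (⨅ Y, s Y)) :=
    tendsto_atTop_ciInf hsanti hsbdd
  refine ⟨((⨅ Y, s Y) - l - l') / 2, ?_⟩
  have hgf : g = fun Y => (s Y - f Y - f' Y) / 2 := by
    funext Y
    have := hs_eq Y
    simp only [hg] at this ⊢
    linarith
  rw [hgf]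
  exact ((hstend.sub hl).sub hl').div_const 2
end

section
/- Let C = 8H + ∑_{j=1}^{p} ∑_{ν=0}^{N−1} (N − 4ν + 4ν²/N) Θ_{j,ν} be a ℚ-divisor on a surface, where the intersection numbers are: H·H = −Np/12, H·Θ_{j,ν} = 1 if ν = 0 and 0 otherwise, Θ_{j,ν}·Θ_{j,ν} = −2, Θ_{j,ν}·Θ_{j,ν'} = 1 if j'=j and ν' ≡ ν ± 1 mod N, and 0 otherwise (distinct j's intersect trivially). Then C·C = 16(N²+1)p/(3N). -/
private lemma sumQcf (M : ℝ) (n : ℕ) :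
    ∑ k ∈ Finset.range n, (M - 2*(k:ℝ))^4 =
      (-8/15)*n + 4*n*M^2 + 4*n*M^3 + n*M^4 - 8*n^2*M - 12*n^2*M^2 - 4*n^2*M^3
      + (16/3)*n^3 + 16*n^3*M + 8*n^3*M^2 - 8*n^4 - 8*n^4*M + (16/5)*n^5 := by
  induction n with
  | zero => norm_num
  | succ n ih => rw [Finset.sum_range_succ, ih]; push_cast; ring

private lemma sumAcf (M : ℝ) (n : ℕ) :
    ∑ k ∈ Finset.range n, (M - 2*(k:ℝ))^2 * (M - 2*((k:ℝ)+1))^2 =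
      (32/15)*n - 4*n*M^2 + n*M^4 + 8*n^2*M - 4*n^2*M^3 - (16/3)*n^3
      + 8*n^3*M^2 - 8*n^4*M + (16/5)*n^5 := by
  induction n with
  | zero => norm_num
  | succ n ih => rw [Finset.sum_range_succ, ih]; push_cast; ring

private lemma zsum {N : ℕ} [NeZero N] (g : ZMod N → ℝ) :
    ∑ ν : ZMod N, g ν = ∑ k ∈ Finset.range N, g (k : ZMod N) := by
  rw [← Fin.sum_univ_eq_sum_range]
  refine (Fintype.sum_bijective (fun i : Fin N => ((i : ℕ) : ZMod N)) ?_
    (fun i : Fin N => g ((i : ℕ) : ZMod N)) g (fun i => rfl)).symm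
  rw [Fintype.bijective_iff_injective_and_card]
  refine ⟨fun a b h => ?_, by simp [ZMod.card]⟩
  have := congrArg ZMod.val h
  rw [ZMod.val_natCast_of_lt a.2, ZMod.val_natCast_of_lt b.2] at this
  exact Fin.ext this

private lemma innerSumAux {N : ℕ} [NeZero N] (hN : 3 ≤ N) (c : ZMod N → ℝ) (ν : ZMod N) :
    ∑ ν' : ZMod N, c ν' * (if ν' = ν then (-2:ℝ)
        else if ν' = ν + 1 ∨ ν' = ν - 1 then 1 else 0)
      = -2 * c ν + c (ν+1) + c (ν-1) := by
  haveI : Fact (1 < N) := ⟨by omega⟩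
  have one_ne : (1 : ZMod N) ≠ 0 := by
    intro h
    have := congrArg ZMod.val h
    rw [ZMod.val_one, ZMod.val_zero] at this
    exact one_ne_zero this
  have two_ne : (2 : ZMod N) ≠ 0 := by
    have : ((2:ℕ) : ZMod N) ≠ 0 := by
      rw [Ne, ZMod.natCast_eq_zero_iff]
      intro h
      exact absurd (Nat.le_of_dvd (by norm_num) h) (by omega)
    simpa using this
  have h1 : ν + 1 ≠ ν := fun h => one_ne (by linear_combination h)
  have h2 : ν - 1 ≠ ν := fun h => one_ne (by linear_combination -h)
  have h3 : ν + 1 ≠ ν - 1 := fun h => two_ne (by linear_combination h)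
  have key : ∀ ν' : ZMod N, c ν' * (if ν' = ν then (-2:ℝ)
        else if ν' = ν + 1 ∨ ν' = ν - 1 then 1 else 0)
      = (if ν' = ν then -2 * c ν' else 0) + (if ν' = ν + 1 then c ν' else 0)
        + (if ν' = ν - 1 then c ν' else 0) := by
    intro ν'
    by_cases e1 : ν' = ν
    · subst e1; simp [Ne.symm h1, Ne.symm h2]; ring
    · by_cases e2 : ν' = ν + 1
      · subst e2; simp [h1, h3, e1]
      · by_cases e3 : ν' = ν - 1
        · subst e3; simp [h2, Ne.symm h3, e1]
        · simp [e1, e2, e3]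
  rw [Finset.sum_congr rfl (fun ν' _ => key ν'), Finset.sum_add_distrib,
    Finset.sum_add_distrib, Finset.sum_ite_eq' Finset.univ ν,
    Finset.sum_ite_eq' Finset.univ (ν + 1), Finset.sum_ite_eq' Finset.univ (ν - 1)]
  simp

/-- Self-intersection of the divisor
`C = 8H + ∑_{j=1}^{p} ∑_{ν=0}^{N−1} (N − 4ν + 4ν²/N) Θ_{j,ν}`
in the ℝ-span of the classes `H`, `Θ_{j,ν}` (indices `ν` read mod `N`), with
the given intersection numbers: `C·C = 16(N²+1)p/(3N)`. -/
theorem self_intersection_C (N p : ℕ) [NeZero N] (hN : 3 ≤ N) (hp : 0 < p)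
    (V : Type*) [AddCommGroup V] [Module ℝ V]
    (B : V →ₗ[ℝ] V →ₗ[ℝ] ℝ) (hsymm : ∀ x y : V, B x y = B y x)
    (H : V) (Θ : Fin p → ZMod N → V)
    (hHH : B H H = -((N : ℝ) * p) / 12)
    (hHΘ : ∀ j ν, B H (Θ j ν) = if ν = 0 then 1 else 0)
    (hΘΘ : ∀ j j' ν ν', B (Θ j ν) (Θ j' ν') =
      if j = j' ∧ ν' = ν then -2
      else if j = j' ∧ (ν' = ν + 1 ∨ ν' = ν - 1) then 1
      else 0) :
    B ((8 : ℝ) • H + ∑ j : Fin p, ∑ ν : ZMod N,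
        ((N : ℝ) - 4 * (ν.val : ℝ) + 4 * (ν.val : ℝ) ^ 2 / N) • Θ j ν)
      ((8 : ℝ) • H + ∑ j : Fin p, ∑ ν : ZMod N,
        ((N : ℝ) - 4 * (ν.val : ℝ) + 4 * (ν.val : ℝ) ^ 2 / N) • Θ j ν)
      = 16 * ((N : ℝ) ^ 2 + 1) * p / (3 * N) := by
  have hN0 : (N : ℝ) ≠ 0 := Nat.cast_ne_zero.mpr (by omega)
  set c : ZMod N → ℝ := fun ν => ((N : ℝ) - 4 * (ν.val : ℝ) + 4 * (ν.val : ℝ) ^ 2 / N)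
    with hc
  show B ((8 : ℝ) • H + ∑ j : Fin p, ∑ ν : ZMod N, c ν • Θ j ν)
      ((8 : ℝ) • H + ∑ j : Fin p, ∑ ν : ZMod N, c ν • Θ j ν)
    = 16 * ((N : ℝ) ^ 2 + 1) * p / (3 * N)
  set D : V := ∑ j : Fin p, ∑ ν : ZMod N, c ν • Θ j ν with hD
  -- expansion
  have expand : B ((8 : ℝ) • H + D) ((8 : ℝ) • H + D)
      = 64 * B H H + 8 * B H D + 8 * B D H + B D D := by
    simp only [map_add, map_smul, LinearMap.add_apply, LinearMap.smul_apply, smul_eq_mul]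
    ring
  rw [expand]
  -- c at 0
  have hc0 : c 0 = (N : ℝ) := by simp [hc, ZMod.val_zero]
  -- B H D
  have hBHD : B H D = (N : ℝ) * p := by
    rw [hD, map_sum]
    simp only [map_sum, map_smul, smul_eq_mul, hHΘ, mul_ite, mul_one, mul_zero]
    rw [Finset.sum_congr rfl (fun j _ => Finset.sum_ite_eq' Finset.univ 0 c)]
    simp [hc0]
    ring
  have hBDH : B D H = (N : ℝ) * p := (hsymm D H).trans hBHD
  -- B D D
  have hjsum : ∀ (j : Fin p) (ν : ZMod N),
      (∑ j' : Fin p, ∑ ν' : ZMod N, c ν' * B (Θ j ν) (Θ j' ν'))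
        = -2 * c ν + c (ν+1) + c (ν-1) := by
    intro j ν
    have hj : ∀ j' : Fin p, (∑ ν' : ZMod N, c ν' * B (Θ j ν) (Θ j' ν'))
        = if j' = j then (-2 * c ν + c (ν+1) + c (ν-1)) else 0 := by
      intro j'
      by_cases e : j = j'
      · subst e
        simp only [hΘΘ, true_and, if_pos rfl]
        exact innerSumAux hN c ν
      · simp only [hΘΘ, e, false_and, if_false, mul_zero, Finset.sum_const_zero,
          if_neg (Ne.symm e)]
    rw [Finset.sum_congr rfl (fun j' _ => hj j'),
      Finset.sum_ite_eq' Finset.univ j]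
    simp
  have keyR : ∀ w : V, B w D = ∑ j : Fin p, ∑ ν : ZMod N, c ν * B w (Θ j ν) := by
    intro w
    rw [hD]
    simp only [map_sum, map_smul, smul_eq_mul]
  have hBDD : B D D = p * ∑ ν : ZMod N,
      c ν * (-2 * c ν + c (ν+1) + c (ν-1)) := by
    rw [keyR D]
    have hrow : ∀ (j : Fin p) (ν : ZMod N),
        B D (Θ j ν) = -2 * c ν + c (ν+1) + c (ν-1) := by
      intro j ν
      rw [hsymm, keyR (Θ j ν)]
      exact hjsum j ν
    rw [Finset.sum_congr rfl fun j _ =>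
      Finset.sum_congr rfl fun ν (_ : ν ∈ Finset.univ) => by rw [hrow j ν]]
    simp only [Finset.sum_const, Finset.card_univ, Fintype.card_fin, nsmul_eq_mul]
  -- shift
  have hshift : (∑ ν : ZMod N, c ν * c (ν - 1)) = ∑ ν : ZMod N, c ν * c (ν + 1) := by
    refine Fintype.sum_equiv (Equiv.addRight (1 : ZMod N))
      (fun ν => c ν * c (ν + 1)) (fun ν => c ν * c (ν - 1)) (fun ν => ?_) |>.symm
    simp [Equiv.coe_addRight, add_sub_cancel_right]
    ring
  -- values of c on casts
  have hcv : ∀ k : ℕ, k < N → c (k : ZMod N) = ((N:ℝ) - 2*(k:ℝ))^2 / N := by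
    intro k hk
    rw [hc]
    simp only [ZMod.val_natCast_of_lt hk]
    field_simp
    ring
  have hcv1 : ∀ k : ℕ, k < N → c ((k : ZMod N) + 1) = ((N:ℝ) - 2*((k:ℝ)+1))^2 / N := by
    intro k hk
    have e1 : ((k : ZMod N) + 1) = ((k + 1 : ℕ) : ZMod N) := by push_cast; ring
    rw [e1, hc]
    simp only [ZMod.val_natCast]
    rcases eq_or_lt_of_le (show k + 1 ≤ N by omega) with h | h
    · have hk1 : ((k:ℝ) + 1) = (N:ℝ) := by exact_mod_cast congrArg (Nat.cast : ℕ → ℝ) h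
      rw [h, Nat.mod_self, hk1]
      push_cast
      field_simp
      ring
    · rw [Nat.mod_eq_of_lt h]
      push_cast
      field_simp
      ring
  -- the two scalar sums
  have hQ : (∑ ν : ZMod N, c ν ^ 2)
      = (∑ k ∈ Finset.range N, ((N:ℝ) - 2*(k:ℝ))^4) / (N:ℝ)^2 := by
    rw [zsum (fun ν => c ν ^ 2), Finset.sum_div]
    refine Finset.sum_congr rfl fun k hk => ?_
    rw [hcv k (Finset.mem_range.mp hk)]
    rw [div_pow]
    ring
  have hA : (∑ ν : ZMod N, c ν * c (ν + 1))
      = (∑ k ∈ Finset.range N, ((N:ℝ) - 2*(k:ℝ))^2 * ((N:ℝ) - 2*((k:ℝ)+1))^2) / (N:ℝ)^2 := by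
    rw [zsum (fun ν => c ν * c (ν + 1)), Finset.sum_div]
    refine Finset.sum_congr rfl fun k hk => ?_
    rw [hcv k (Finset.mem_range.mp hk), hcv1 k (Finset.mem_range.mp hk),
      div_mul_div_comm, ← pow_two]
  -- assemble
  have hSsplit : (∑ ν : ZMod N, c ν * (-2 * c ν + c (ν+1) + c (ν-1)))
      = -2 * (∑ ν : ZMod N, c ν ^ 2) + 2 * (∑ ν : ZMod N, c ν * c (ν + 1)) := by
    have e : ∀ ν : ZMod N, c ν * (-2 * c ν + c (ν+1) + c (ν-1))
        = -2 * c ν ^ 2 + c ν * c (ν+1) + c ν * c (ν-1) := fun ν => by ring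
    rw [Finset.sum_congr rfl fun ν _ => e ν, Finset.sum_add_distrib,
      Finset.sum_add_distrib, hshift, ← Finset.mul_sum]
    ring
  rw [hHH, hBHD, hBDH, hBDD, hSsplit, hQ, hA, sumQcf ((N:ℝ)) N, sumAcf ((N:ℝ)) N]
  field_simp
  ring
end
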